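/- arXiv:1809.04948 — 3 statements merged into one kernel-verified Lean document; each statement's English description precedes it below -/
import Mathlib

section
/- The function χ(t) = (t² csch(t) / f(t))² for t > 0 extends continuously to t = 0 with χ(0) = 3, and χ is continuous and positive on [0,∞). -/
/-!
Away from `0`, `χ(t) = t⁴ / (sinh² t - t²)`, which is positive and continuous because
`|sinh t| > |t|` for `t ≠ 0`. At `0`, the Taylor expansion `sinh t = t + t³/6 + O(t⁵)` gives
`(sinh t - t)/t³ → 1/6`, and writing `sinh² t - t² = (sinh t - t)(sinh t - t + 2t)` yields
`(sinh² t - t²)/t⁴ → 1/6 · 2 = 1/3`, so `χ(t) → 3 = χ(0)`.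
-/

/-- `χ(t) = (t² csch t / f(t))² = t⁴ csch²(t) / (1 - t² csch²(t))` for `t > 0`,
extended by `χ(0) = 3`. -/
noncomputable def kacChi (t : ℝ) : ℝ :=
  if t = 0 then 3
  else (t ^ 4 / (Real.sinh t) ^ 2) / (1 - t ^ 2 / (Real.sinh t) ^ 2)

open Real Filter Topology

theorem sq_lt_sinh_sq {t : ℝ} (ht : t ≠ 0) : t ^ 2 < sinh t ^ 2 := by
  rw [sq_lt_sq, abs_sinh]
  exact self_lt_sinh_iff.mpr (abs_pos.mpr ht)

theorem abs_sinh_sub_taylor_le {t : ℝ} (ht : |t| ≤ 1) :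
    |sinh t - (t + t ^ 3 / 6)| ≤ |t| ^ 5 / 100 := by
  have taylor : ∀ x : ℝ, ∑ m ∈ Finset.range 5, x ^ m / m.factorial
      = 1 + x + x ^ 2 / 2 + x ^ 3 / 6 + x ^ 4 / 24 := fun x => by
    norm_num [Finset.sum_range_succ, Nat.factorial]
  -- `Real.exp_bound` with `n = 5` has remainder factor `6 / (5! * 5) = 1 / 100`.
  have hpos := Real.exp_bound ht (n := 5) (by norm_num)
  have hneg := Real.exp_bound (x := -t) (by rwa [abs_neg]) (n := 5) (by norm_num)
  rw [taylor] at hpos hneg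
  rw [abs_neg] at hneg
  norm_num [Nat.factorial] at hpos hneg
  have hsinh : sinh t - (t + t ^ 3 / 6) =
      ((exp t - (1 + t + t ^ 2 / 2 + t ^ 3 / 6 + t ^ 4 / 24))
        - (exp (-t) - (1 - t + t ^ 2 / 2 - t ^ 3 / 6 + t ^ 4 / 24))) / 2 := by
    rw [sinh_eq]; ring
  rw [hsinh, abs_le]
  constructor <;> linarith [abs_le.mp hpos, abs_le.mp hneg]

theorem tendsto_sinh_sub_self_div_pow_three :
    Tendsto (fun t => (sinh t - t) / t ^ 3) (𝓝[≠] 0) (𝓝 (1 / 6)) := by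
  rw [← tendsto_sub_nhds_zero_iff]
  refine squeeze_zero_norm' (a := fun t => |t| ^ 2 / 100) ?_ ?_
  · filter_upwards [self_mem_nhdsWithin,
      nhdsWithin_le_nhds (Metric.closedBall_mem_nhds (0 : ℝ) one_pos)] with t (ht0 : t ≠ 0) ht1
    have ht : 0 < |t| := abs_pos.mpr ht0
    have hle := abs_sinh_sub_taylor_le (by simpa using ht1)
    have hdiff : (sinh t - t) / t ^ 3 - 1 / 6 = (sinh t - (t + t ^ 3 / 6)) / t ^ 3 := by
      field_simp [ht0]; ring
    rw [Real.norm_eq_abs, hdiff, abs_div, abs_pow, div_le_iff₀ (by positivity)]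
    calc _ ≤ |t| ^ 5 / 100 := hle
      _ = _ := by ring
  · have : Tendsto (fun t : ℝ => |t| ^ 2 / 100) (𝓝 0) (𝓝 0) := by
      simpa using ((continuous_abs.pow 2).div_const (100 : ℝ)).tendsto 0
    exact this.mono_left nhdsWithin_le_nhds

theorem tendsto_sinh_sq_sub_sq_div_pow_four :
    Tendsto (fun t => (sinh t ^ 2 - t ^ 2) / t ^ 4) (𝓝[≠] 0) (𝓝 (1 / 3)) := by
  set g := fun t => (sinh t - t) / t ^ 3
  have hg : Tendsto g (𝓝[≠] 0) (𝓝 (1 / 6)) := tendsto_sinh_sub_self_div_pow_three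
  have hsq : Tendsto (fun t : ℝ => t ^ 2) (𝓝[≠] 0) (𝓝 0) := by
    simpa using ((continuous_pow 2).tendsto (0 : ℝ)).mono_left nhdsWithin_le_nhds
  have hprod := hg.mul ((hsq.mul hg).add_const 2)
  norm_num at hprod
  refine hprod.congr' ?_
  filter_upwards [self_mem_nhdsWithin] with t (ht : t ≠ 0)
  simp only [g]
  field_simp
  ring

theorem kacChi_eq_of_ne_zero {t : ℝ} (ht : t ≠ 0) :
    kacChi t = t ^ 4 / (sinh t ^ 2 - t ^ 2) := by
  have hs : sinh t ≠ 0 := sinh_ne_zero.mpr ht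
  rw [kacChi, if_neg ht, one_sub_div (pow_ne_zero 2 hs),
    div_div_div_cancel_right₀ (pow_ne_zero 2 hs)]

theorem kacChi_pos (t : ℝ) : 0 < kacChi t := by
  rcases eq_or_ne t 0 with rfl | ht
  · simp [kacChi]
  · rw [kacChi_eq_of_ne_zero ht]
    exact div_pos (by positivity) (sub_pos.mpr (sq_lt_sinh_sq ht))

theorem continuousAt_kacChi_of_ne_zero {x : ℝ} (hx : x ≠ 0) : ContinuousAt kacChi x := by
  have hcont : ContinuousAt (fun t => t ^ 4 / (sinh t ^ 2 - t ^ 2)) x :=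
    ContinuousAt.div (by fun_prop) (by fun_prop) (sub_pos.mpr (sq_lt_sinh_sq hx)).ne'
  refine hcont.congr_of_eventuallyEq ?_
  filter_upwards [eventually_ne_nhds hx] with t ht
  exact kacChi_eq_of_ne_zero ht

theorem continuousAt_kacChi_zero : ContinuousAt kacChi 0 := by
  rw [← continuousWithinAt_compl_self, ContinuousWithinAt, show kacChi 0 = 3 by simp [kacChi]]
  have hinv := tendsto_sinh_sq_sub_sq_div_pow_four.inv₀ (by norm_num)
  norm_num at hinv
  refine hinv.congr' ?_
  filter_upwards [self_mem_nhdsWithin] with t (ht : t ≠ 0)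
  exact (kacChi_eq_of_ne_zero ht).symm

theorem continuous_kacChi : Continuous kacChi :=
  continuous_iff_continuousAt.mpr fun x => by
    rcases eq_or_ne x 0 with rfl | hx
    · exact continuousAt_kacChi_zero
    · exact continuousAt_kacChi_of_ne_zero hx

/-- `χ` extends continuously to `t = 0` with value `3`, and is
continuous and positive on `[0,∞)`. -/
theorem stmt5 :
    ContinuousOn kacChi (Set.Ici 0) ∧ (∀ t : ℝ, 0 ≤ t → 0 < kacChi t) :=
  ⟨continuous_kacChi.continuousOn, fun t _ => kacChi_pos t⟩
end

section
/- For the Kac case, for each fixed t > 0, with x = 1 - t/(n+1), one has lim_{n→∞} h_{n+1}(1 - t/(n+1)) = t/sinh(t). -/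
open Filter Real

private lemma stmt11_aux (t : ℝ) :
    Filter.Tendsto (fun n : ℕ => (1 - t / ((n : ℝ) + 1)) ^ (n + 1))
      Filter.atTop (nhds (Real.exp (-t))) := by
  have h := (Real.tendsto_one_add_div_pow_exp (-t)).comp (tendsto_add_atTop_nat 1)
  refine h.congr fun n => ?_
  simp only [Function.comp_apply]
  push_cast
  rw [neg_div, ← sub_eq_add_neg]

theorem stmt11 (t : ℝ) (ht : 0 < t) :
    Filter.Tendsto
      (fun n : ℕ =>
        ((n : ℝ) + 1) * (1 - t / ((n : ℝ) + 1)) ^ n *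
          (1 - (1 - t / ((n : ℝ) + 1)) ^ 2) /
          (1 - (1 - t / ((n : ℝ) + 1)) ^ (2 * n + 2)))
      Filter.atTop (nhds (t / Real.sinh t)) := by
  have hA := stmt11_aux t
  have hx1 : Filter.Tendsto (fun n : ℕ => 1 - t / ((n : ℝ) + 1)) atTop (nhds 1) := by
    have hd : Filter.Tendsto (fun n : ℕ => t / ((n : ℝ) + 1)) atTop (nhds 0) := by
      apply Tendsto.div_atTop tendsto_const_nhds
      exact tendsto_atTop_add_const_right _ 1 tendsto_natCast_atTop_atTop
    simpa using tendsto_const_nhds.sub hd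
  have hmul : Real.exp (-t) * Real.exp t = 1 := by
    rw [← Real.exp_add]; simp
  have h1 : 1 - (Real.exp (-t)) ^ 2 = Real.exp (-t) * (2 * Real.sinh t) := by
    rw [Real.sinh_eq]
    linear_combination -hmul
  have hsinh : Real.sinh t ≠ 0 := ne_of_gt (Real.sinh_pos_iff.mpr ht)
  have h2 : 1 - (Real.exp (-t)) ^ 2 ≠ 0 := by
    rw [h1]
    positivity
  have hg : Filter.Tendsto
      (fun n : ℕ => t * (1 + (1 - t / ((n : ℝ) + 1))) *
        ((1 - t / ((n : ℝ) + 1)) ^ (n + 1) / (1 - t / ((n : ℝ) + 1))) /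
        (1 - ((1 - t / ((n : ℝ) + 1)) ^ (n + 1)) ^ 2))
      atTop (nhds (t * (1 + 1) * (Real.exp (-t) / 1) / (1 - (Real.exp (-t)) ^ 2))) := by
    exact ((tendsto_const_nhds.mul (tendsto_const_nhds.add hx1)).mul
      (hA.div hx1 one_ne_zero)).div (tendsto_const_nhds.sub (hA.pow 2)) h2
  have hval : t * (1 + 1) * (Real.exp (-t) / 1) / (1 - (Real.exp (-t)) ^ 2)
      = t / Real.sinh t := by
    rw [h1]
    have he : Real.exp (-t) ≠ 0 := Real.exp_ne_zero _
    field_simp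
    ring
  rw [hval] at hg
  refine Filter.Tendsto.congr' ?_ hg
  filter_upwards [eventually_ge_atTop ⌈t⌉₊] with n hn
  have hn1 : ((n : ℝ) + 1) ≠ 0 := by positivity
  have hlt : t / ((n : ℝ) + 1) < 1 := by
    rw [div_lt_one (by positivity)]
    calc t ≤ (⌈t⌉₊ : ℝ) := Nat.le_ceil t
    _ ≤ (n : ℝ) := by exact_mod_cast hn
    _ < (n : ℝ) + 1 := by linarith
  have hxpos : (0 : ℝ) < 1 - t / ((n : ℝ) + 1) := by linarith
  have hxne : (1 : ℝ) - t / ((n : ℝ) + 1) ≠ 0 := ne_of_gt hxpos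
  have hd : (1 - t / ((n : ℝ) + 1)) ^ (2 * n + 2)
      = ((1 - t / ((n : ℝ) + 1)) ^ (n + 1)) ^ 2 := by
    rw [← pow_mul]
    congr 1
    ring
  rw [hd]
  congr 1
  rw [pow_succ, mul_div_cancel_right₀ _ hxne]
  have hkey : ((n : ℝ) + 1) * (1 - (1 - t / ((n : ℝ) + 1))) = t := by field_simp; ring
  linear_combination (-(1 + (1 - t / ((n : ℝ) + 1)))) * (1 - t / ((n : ℝ) + 1)) ^ n * hkey
end

section
/- For every p ≥ 1, Σ_{k=1}^{p} ((-2)^k / k!) Σ_{j₁+⋯+j_k = p, j_i ≥ 1} n(j₁,…,j_k)/(j₁ ⋯ j_k) equals -2 if p = 1, 4 if p = 2, -2 if p = 3, and 0 if p ≥ 4, where n(j₁,…,j_k) is the number of indices i with j_i = 1. -/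
/-!
Sorted by their number `k` of blocks, the compositions of `p` weighted by `∏ w(jᵢ)` add up to
the coefficient of `Xᵖ` in `Wᵏ`, where `W = ∑ w(j) Xʲ`; weighting them in addition by the number
of blocks equal to `1` gives `k X Wᵏ⁻¹` when `w(1) = 1`. For `w(j) = 1 / j` we have
`W = log (1 / (1 - X))`, so the sum in question is the coefficient of `Xᵖ` in
`-2 X exp (-2 W) = -2 X (1 - X) ^ 2`. The identity `exp (-a W) = (1 - X) ^ a` is checked on
truncations of the exponential series: both sides solve `(1 - X) g' = -a g` up to an error of
order `Xᴺ`, and this differential equation determines the coefficients one after the other.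
-/

open Finset PowerSeries
open scoped Nat

namespace PowerSeries

theorem coeff_succ_mk_mul {R : Type*} [CommSemiring R] {w : ℕ → R} (hw : w 0 = 0)
    (f : R⟦X⟧) (m : ℕ) :
    coeff (m + 1) (mk w * f) = ∑ j ∈ range (m + 1), w (j + 1) * coeff (m - j) f := by
  rw [coeff_mul, Nat.sum_antidiagonal_succ, coeff_mk, hw, zero_mul, zero_add,
    Nat.sum_antidiagonal_eq_sum_range_succ (fun i j => coeff (i + 1) (mk w) * coeff j f)]
  simp only [coeff_mk]

theorem coeff_one_sub_X_mul_derivative {R : Type*} [CommRing R] (f : R⟦X⟧) (n : ℕ) :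
    coeff n ((1 - X) * d⁄dX R f) = (n + 1) * coeff (n + 1) f - n * coeff n f := by
  cases n with
  | zero =>
    rw [sub_mul, one_mul, map_sub, coeff_zero_X_mul, coeff_derivative]
    simp
  | succ n =>
    rw [sub_mul, one_mul, map_sub, coeff_succ_X_mul, coeff_derivative, coeff_derivative]
    push_cast
    ring

variable {K : Type*} [Field K]

theorem coeff_eq_zero_of_one_sub_X_mul_derivative_add_smul [CharZero K] {g : K⟦X⟧} (a : K)
    {N : ℕ} (h0 : constantCoeff g = 0)
    (h : ∀ m < N, coeff m ((1 - X) * d⁄dX K g + a • g) = 0) : ∀ n ≤ N, coeff n g = 0 := by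
  intro n hn
  induction n with
  | zero => rwa [coeff_zero_eq_constantCoeff_apply]
  | succ n ih =>
    have hn' := h n (by omega)
    rw [map_add, coeff_one_sub_X_mul_derivative, coeff_smul, ih (by omega)] at hn'
    simpa [Nat.cast_add_one_ne_zero] using hn'

variable (K) in
/-- The series `log (1 / (1 - X)) = ∑ Xⁿ / n`; its constant coefficient is `0⁻¹ = 0`. -/
noncomputable def logInvOneSub : K⟦X⟧ := mk fun n => (n : K)⁻¹

theorem constantCoeff_logInvOneSub : constantCoeff (logInvOneSub K) = 0 := by
  simp [logInvOneSub, ← coeff_zero_eq_constantCoeff_apply]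

theorem coeff_logInvOneSub_pow_of_lt {k n : ℕ} (h : n < k) :
    coeff n (logInvOneSub K ^ k) = 0 :=
  X_pow_dvd_iff.mp (pow_dvd_pow_of_dvd (X_dvd_iff.mpr constantCoeff_logInvOneSub) k) n h

theorem one_sub_X_mul_derivative_logInvOneSub [CharZero K] :
    (1 - X) * d⁄dX K (logInvOneSub K) = 1 := by
  ext n
  rw [coeff_one_sub_X_mul_derivative]
  cases n with
  | zero => simp [logInvOneSub]
  | succ n =>
    have h1 := Nat.cast_add_one_ne_zero (R := K) n
    have h2 := Nat.cast_add_one_ne_zero (R := K) (n + 1)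
    push_cast at h2
    simp [logInvOneSub, coeff_one, h1, h2]

theorem one_sub_X_mul_derivative_logInvOneSub_pow [CharZero K] (k : ℕ) :
    (1 - X) * d⁄dX K (logInvOneSub K ^ (k + 1)) = (k + 1 : K) • logInvOneSub K ^ k := by
  rw [derivative_pow, Nat.add_sub_cancel, mul_comm, mul_assoc, mul_comm (d⁄dX K _),
    one_sub_X_mul_derivative_logInvOneSub, mul_one, ← Nat.cast_add_one, Nat.cast_smul_eq_nsmul,
    nsmul_eq_mul]

theorem one_sub_X_mul_derivative_one_sub_X_pow (a : ℕ) :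
    (1 - X) * d⁄dX K ((1 - X) ^ a) = -(a : K) • (1 - X) ^ a := by
  rcases a with _ | a
  · simp
  · rw [derivative_pow, map_sub, derivative_one, derivative_X, Nat.add_sub_cancel, neg_smul,
      Nat.cast_smul_eq_nsmul, nsmul_eq_mul, pow_succ]
    ring

/-- Truncations of `exp (-a log (1 / (1 - X))) = (1 - X) ^ a`. -/
theorem coeff_sum_range_smul_logInvOneSub_pow [CharZero K] (a : ℕ) {N n : ℕ} (hn : n ≤ N) :
    coeff n (∑ k ∈ range (N + 1), ((-a : K) ^ k / k !) • logInvOneSub K ^ k) =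
      coeff n ((1 - X) ^ a) := by
  set L := logInvOneSub K
  set E : ℕ → K⟦X⟧ := fun N => ∑ k ∈ range N, ((-a : K) ^ k / k !) • L ^ k
  have hE : (1 - X) * d⁄dX K (E (N + 1)) = -(a : K) • E N := by
    simp only [E, map_sum, Derivation.map_smul, mul_sum, mul_smul_comm]
    rw [sum_range_succ', pow_zero L, derivative_one, mul_zero, smul_zero, add_zero, smul_sum]
    refine sum_congr rfl fun k _ => ?_
    rw [one_sub_X_mul_derivative_logInvOneSub_pow, smul_smul, smul_smul, Nat.factorial_succ]
    congr 1
    push_cast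
    field_simp
    ring
  have hsucc : E (N + 1) = E N + ((-a : K) ^ N / N !) • L ^ N := sum_range_succ _ _
  have hconst : constantCoeff (E (N + 1) - (1 - X) ^ a) = 0 := by
    simp [E, sum_range_succ', L, constantCoeff_logInvOneSub]
  have hode : ∀ m < N, coeff m ((1 - X) * d⁄dX K (E (N + 1) - (1 - X) ^ a) +
      (a : K) • (E (N + 1) - (1 - X) ^ a)) = 0 := by
    intro m hm
    have : (1 - X) * d⁄dX K (E (N + 1) - (1 - X) ^ a) + (a : K) • (E (N + 1) - (1 - X) ^ a) =
        ((a : K) * ((-a : K) ^ N / N !)) • L ^ N := by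
      rw [map_sub, mul_sub, hE, one_sub_X_mul_derivative_one_sub_X_pow, hsucc]
      module
    rw [this, coeff_smul, coeff_logInvOneSub_pow_of_lt hm, smul_zero]
  have := coeff_eq_zero_of_one_sub_X_mul_derivative_add_smul (a : K) hconst hode n hn
  rwa [map_sub, sub_eq_zero] at this

end PowerSeries

namespace Composition

def blocksFinset (n : ℕ) : Finset (List ℕ) := (univ : Finset (Composition n)).image blocks

theorem mem_blocksFinset {n : ℕ} {l : List ℕ} :
    l ∈ blocksFinset n ↔ (∀ x ∈ l, 0 < x) ∧ l.sum = n := by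
  simp only [blocksFinset, mem_image, mem_univ, true_and]
  constructor
  · rintro ⟨c, rfl⟩
    exact ⟨fun _ => c.blocks_pos, c.blocks_sum⟩
  · rintro ⟨hpos, hsum⟩
    exact ⟨⟨l, hpos _, hsum⟩, rfl⟩

theorem blocksFinset_zero : blocksFinset 0 = {[]} := by
  ext (_ | ⟨a, l⟩) <;> simp [mem_blocksFinset]
  omega

section Sums

variable {M : Type*} [AddCommMonoid M]

theorem sum_eq_sum_blocksFinset (n : ℕ) (F : List ℕ → M) :
    ∑ c : Composition n, F c.blocks = ∑ l ∈ blocksFinset n, F l :=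
  (sum_image fun _ _ _ _ h => Composition.ext h).symm

theorem sum_blocksFinset_succ (n : ℕ) (F : List ℕ → M) :
    ∑ l ∈ blocksFinset (n + 1), F l =
      ∑ j ∈ range (n + 1), ∑ l ∈ blocksFinset (n - j), F ((j + 1) :: l) := by
  rw [sum_sigma']
  refine (sum_nbij' (fun x : (_ : ℕ) × List ℕ => (x.1 + 1) :: x.2)
    (fun l => ⟨l.headI - 1, l.tail⟩) ?_ ?_ ?_ ?_ fun _ _ => rfl).symm
  · simp only [mem_sigma, mem_range, mem_blocksFinset, List.mem_cons, List.sum_cons]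
    rintro ⟨j, l⟩ ⟨hj, hpos, hsum⟩
    refine ⟨?_, by omega⟩
    rintro x (rfl | hx)
    exacts [j.succ_pos, hpos x hx]
  · rintro (_ | ⟨a, l⟩)
    · simp [mem_blocksFinset]
    simp only [mem_blocksFinset, List.mem_cons, List.sum_cons, mem_sigma, mem_range,
      List.headI_cons, List.tail_cons]
    rintro ⟨hpos, hsum⟩
    have ha := hpos a (.inl rfl)
    exact ⟨by omega, fun x hx => hpos x (.inr hx), by omega⟩
  · rintro ⟨j, l⟩ -
    simp
  · rintro (_ | ⟨a, l⟩) hl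
    · simp [mem_blocksFinset] at hl
    have ha := (mem_blocksFinset.mp hl).1 a (by simp)
    simp only [List.headI_cons, List.tail_cons]
    congr
    omega

theorem sum_blocksFinset_eq_sum_range_length (n : ℕ) (F : List ℕ → M) :
    ∑ l ∈ blocksFinset n, F l =
      ∑ k ∈ range (n + 1), ∑ l ∈ blocksFinset n, if l.length = k then F l else 0 := by
  rw [sum_comm]
  refine sum_congr rfl fun l hl => ?_
  obtain ⟨hpos, hsum⟩ := mem_blocksFinset.mp hl
  have := l.length_le_sum_of_one_le hpos
  rw [sum_ite_eq, if_pos (mem_range.mpr (by omega))]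

end Sums

section WeightedSums

variable {R : Type*} [CommSemiring R] {w : ℕ → R}

theorem sum_blocksFinset_length_eq_prod (hw : w 0 = 0) (k n : ℕ) :
    ∑ l ∈ blocksFinset n, (if l.length = k then (l.map w).prod else 0) =
      coeff n (PowerSeries.mk w ^ k) := by
  induction k generalizing n with
  | zero =>
    cases n with
    | zero => simp [blocksFinset_zero]
    | succ m =>
      rw [sum_blocksFinset_succ]
      simp [coeff_one]
  | succ k ih =>
    cases n with
    | zero => simp [blocksFinset_zero, coeff_zero_eq_constantCoeff, hw]
    | succ m =>
      rw [sum_blocksFinset_succ, pow_succ', coeff_succ_mk_mul hw]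
      refine sum_congr rfl fun j _ => ?_
      simp only [List.length_cons, add_left_inj, List.map_cons, List.prod_cons, ← ih, mul_sum,
        mul_ite, mul_zero]

theorem sum_blocksFinset_length_eq_count_mul_prod (hw : w 0 = 0) (a k n : ℕ) :
    ∑ l ∈ blocksFinset n, (if l.length = k then (l.count a : R) * (l.map w).prod else 0) =
      k * coeff n (monomial a (w a) * PowerSeries.mk w ^ (k - 1)) := by
  rw [monomial_eq_mk]
  set wa : ℕ → R := fun j => if j = a then w a else 0
  have hwa : wa 0 = 0 := by
    simp only [wa]
    split_ifs with h
    exacts [h ▸ hw, rfl]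
  induction k generalizing n with
  | zero => simp
  | succ k ih =>
    cases n with
    | zero => simp [blocksFinset_zero, coeff_zero_eq_constantCoeff, hwa]
    | succ m =>
      have hcons (j : ℕ) (l : List ℕ) :
          (if ((j + 1) :: l).length = k + 1 then
            ((((j + 1) :: l).count a : ℕ) : R) * (((j + 1) :: l).map w).prod else 0) =
            w (j + 1) * (if l.length = k then (l.count a : R) * (l.map w).prod else 0) +
              wa (j + 1) * (if l.length = k then (l.map w).prod else 0) := by
        simp only [List.length_cons, add_left_inj, List.count_cons, beq_iff_eq, List.map_cons,
          List.prod_cons, wa]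
        split_ifs with _ ha <;> (try subst ha) <;> push_cast <;> ring
      simp only [sum_blocksFinset_succ, hcons, sum_add_distrib, ← mul_sum, ih,
        sum_blocksFinset_length_eq_prod hw, mul_left_comm _ (k : R), ← coeff_succ_mk_mul hw,
        ← coeff_succ_mk_mul hwa]
      rcases k with _ | k
      · simp
      · rw [Nat.add_sub_cancel, Nat.add_sub_cancel, mul_left_comm _ (PowerSeries.mk wa),
          ← pow_succ']
        push_cast
        ring

end WeightedSums

theorem sum_mul_count_one_div_prod_eq_sum_coeff {K : Type*} [Field K] (n : ℕ) (f : ℕ → K) :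
    ∑ c : Composition n, f c.length * ((c.blocks.count 1 : K) / (c.blocks.map (↑)).prod) =
      ∑ k ∈ range (n + 1), f k * (k * coeff n (X * logInvOneSub K ^ (k - 1))) := by
  rw [sum_eq_sum_blocksFinset n fun l => f l.length * ((l.count 1 : K) / (l.map (↑)).prod),
    sum_blocksFinset_eq_sum_range_length]
  refine sum_congr rfl fun k _ => ?_
  have key :=
    sum_blocksFinset_length_eq_count_mul_prod (w := fun j : ℕ => (j : K)⁻¹) (by simp) 1 k n
  simp only [Nat.cast_one, inv_one, ← X_eq] at key
  rw [logInvOneSub, ← key, mul_sum]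
  refine sum_congr rfl fun l _ => ?_
  split_ifs with h
  · rw [h, div_eq_mul_inv (l.count 1 : K), List.prod_inv, List.map_map]
    rfl
  · rw [mul_zero]

end Composition

theorem stmt14_general (p : ℕ) :
    (∑ c : Composition p,
        ((-2 : ℝ) ^ c.length / (Nat.factorial c.length : ℝ)) *
          ((c.blocks.count 1 : ℝ) / ((c.blocks.map (fun j : ℕ => (j : ℝ))).prod)))
      = if p = 1 then -2 else if p = 2 then 4 else if p = 3 then -2 else 0 := by
  calc _ = ∑ k ∈ range (p + 1),
        (-2 : ℝ) ^ k / k ! * (k * coeff p (X * logInvOneSub ℝ ^ (k - 1))) :=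
        Composition.sum_mul_count_one_div_prod_eq_sum_coeff p _
    _ = -2 * coeff p
          (X * ∑ k ∈ range p, ((-(2 : ℕ) : ℝ) ^ k / k !) • logInvOneSub ℝ ^ k) := by
        rw [sum_range_succ', mul_sum, map_sum, mul_sum]
        simp only [Nat.cast_zero, zero_mul, mul_zero, add_zero, Nat.add_sub_cancel, mul_smul_comm,
          coeff_smul, smul_eq_mul]
        refine sum_congr rfl fun k _ => ?_
        rw [Nat.factorial_succ]
        push_cast
        field_simp
        ring
    _ = -2 * coeff p (X * (1 - X) ^ 2) := by
        rcases p with _ | q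
        · simp
        · rw [coeff_succ_X_mul, coeff_succ_X_mul, coeff_sum_range_smul_logInvOneSub_pow 2 le_rfl]
    _ = _ := by
        rw [show (X * (1 - X) ^ 2 : ℝ⟦X⟧) = X - X ^ 2 - X ^ 2 + X ^ 3 by ring]
        rcases p with _ | _ | _ | _ | p <;> simp [coeff_X, coeff_X_pow]
        norm_num

/-- For `p ≥ 1`,
`Σ_{k=1}^p ((-2)^k/k!) Σ_{j₁+⋯+j_k=p} n(j₁,…,j_k)/(j₁⋯j_k)` equals `-2, 4, -2, 0`
for `p = 1, 2, 3, ≥4` respectively, where `n(j₁,…,j_k)` counts the indices `i`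
with `j_i = 1`.  The double sum is a sum over all compositions of `p`. -/
theorem stmt14 (p : ℕ) (hp : 1 ≤ p) :
    (∑ c : Composition p,
        ((-2 : ℝ) ^ c.length / (Nat.factorial c.length : ℝ)) *
          ((c.blocks.count 1 : ℝ) / ((c.blocks.map (fun j : ℕ => (j : ℝ))).prod)))
      = if p = 1 then -2 else if p = 2 then 4 else if p = 3 then -2 else 0 :=
  stmt14_general p
end
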